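/- Lower bound of Proposition 6.1: let (A_n)_n be the realization of model A started from the all-ones configuration 1^ℤ (A_0 = 1^ℤ, A_{n+1} = 𝒜(A_n,U_n) with i.i.d. uniform updates). Then for every n ≥ 1, P(A_{0,n}A_{1,n} ∈ {00,11}) = d_{n−1}/2, where d_n = 4^{−n} C(2n+1,n). Equivalently, for model B started from the fully occupied configuration •^ℤ, P(B_{0,n} = •) = d_{n−1}/2 for n ≥ 1. -/

import Mathlib

open MeasureTheory ProbabilityTheory

/-!
Conventions: a configuration of model A is `x : ℤ → Bool` (`false` = 0, `true` = 1);
a configuration of model B is `y : ℤ → Bool` (`false` = ∘, `true` = •);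
an update is `u : ℤ → Bool` (`true` = ↑, `false` = →).
-/

/-- The local map `𝒜` of model A. -/
def modelA (x u : ℤ → Bool) : ℤ → Bool := fun i =>
  if x (i - 1) = x i then xor (x i) (u i) else x (i - 1)

/-- The local map `ℬ` of model B: the `i`-th coordinate of `ℬ(y,u)` is `•` iff
`(y_{i-1}y_i, u_{i-1}u_i) ∈ {(•∘, →⋅), (∘•, ⋅↑), (••, ↑↑), (••, →→)}`. -/
def modelB (y u : ℤ → Bool) : ℤ → Bool := fun i =>
  match y (i - 1), y i with
  | true, false => !u (i - 1)
  | false, true => u i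
  | true, true => u (i - 1) == u i
  | false, false => false

/-!
The pairs `x_{i-1} == x_i` of model A evolve as model B, so both claims concern model B started
from `•^ℤ`. There particles move right (→) or stay (↑) and annihilate in pairs, so site `i` is
occupied at time `n` iff an odd number of initial sites have trajectories ending at `i`; that
number is the gap between the backward walks traced from `i` and `i + 1`. Until they meet, the
two walks read distinct, fresh coins, so their gap is a lazy walk with steps `-1, 0, 0, +1`
absorbed at `0`. By reflection it is at `y + 1` after `n` steps with probability
`4⁻ⁿ (C(2n, n+y) - C(2n, n+y+2))`, and summing over odd gaps telescopes to
`C(2n, n) / 4ⁿ = d_{n-1} / 2`.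
-/

def walkStep (b : Bool) : ℤ := bif b then 0 else -1

/-- `backWalk u n g s` is the leftmost site at time `n - s` whose trajectory reaches a site `≥ g`
at time `n`; coin `false` (→) moves a particle one site right, `true` (↑) keeps it in place. -/
def backWalk (u : ℤ × ℕ → Bool) (n : ℕ) (g : ℤ) : ℕ → ℤ
  | 0 => g
  | s + 1 => backWalk u n g s + walkStep (u (backWalk u n g s - 1, n - (s + 1)))

def walkGap (u : ℤ × ℕ → Bool) (n : ℕ) (g : ℤ) (s : ℕ) : ℤ :=
  backWalk u n (g + 1) s - backWalk u n g s

/-- Number of initial sites whose trajectory ends at `i` at time `m`, annihilation ignored. -/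
def arrivals (u : ℤ × ℕ → Bool) : ℕ → ℤ → ℕ
  | 0, _ => 1
  | m + 1, i =>
    (bif u (i - 1, m) then 0 else arrivals u m (i - 1)) + (bif u (i, m) then arrivals u m i else 0)

section Walks

variable (u : ℤ × ℕ → Bool) (n : ℕ) (g : ℤ)

lemma backWalk_le : ∀ s, backWalk u n g s ≤ g
  | 0 => le_rfl
  | s + 1 => by
    have := backWalk_le s
    cases h : u (backWalk u n g s - 1, n - (s + 1)) <;> simp [backWalk, walkStep, h] <;> omega

lemma sub_le_backWalk : ∀ s : ℕ, g - s ≤ backWalk u n g s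
  | 0 => by simp [backWalk]
  | s + 1 => by
    have := sub_le_backWalk s
    cases h : u (backWalk u n g s - 1, n - (s + 1)) <;> simp [backWalk, walkStep, h] <;> omega

lemma backWalk_succ_right (m : ℕ) :
    ∀ s, backWalk u (m + 1) g (s + 1) = backWalk u m (g + walkStep (u (g - 1, m))) s
  | 0 => rfl
  | s + 1 => by
    rw [backWalk, backWalk_succ_right m s, backWalk, Nat.add_sub_add_right]

lemma walkGap_succ (s : ℕ) :
    walkGap u n g (s + 1) = if walkGap u n g s = 0 then 0 else walkGap u n g s +
      walkStep (u (backWalk u n (g + 1) s - 1, n - (s + 1))) -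
      walkStep (u (backWalk u n g s - 1, n - (s + 1))) := by
  unfold walkGap
  split_ifs with h
  · rw [sub_eq_zero] at h ⊢
    rw [backWalk, backWalk, h]
  · rw [backWalk, backWalk]; ring

variable {u n g} in
lemma backWalk_congr {u' : ℤ × ℕ → Bool} :
    ∀ s, s ≤ n → (∀ i ℓ, g - s ≤ i → i < g → n - s ≤ ℓ → ℓ < n → u (i, ℓ) = u' (i, ℓ)) →
      backWalk u n g s = backWalk u' n g s
  | 0, _, _ => rfl
  | s + 1, hs, h => by
    have ih : backWalk u n g s = backWalk u' n g s :=
      backWalk_congr s (by omega) fun i ℓ h₁ h₂ h₃ h₄ => h i ℓ (by omega) h₂ (by omega) h₄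
    have := backWalk_le u n g s
    have := sub_le_backWalk u n g s
    rw [backWalk, backWalk, ← ih, h _ _ (by omega) (by omega) (by omega) (by omega)]

lemma arrivals_eq_walkGap : ∀ m i, (arrivals u m i : ℤ) = walkGap u m i m
  | 0, i => by simp [arrivals, walkGap, backWalk]
  | m + 1, i => by
    have h₁ := arrivals_eq_walkGap m (i - 1)
    have h₂ := arrivals_eq_walkGap m i
    simp only [walkGap, sub_add_cancel] at h₁ h₂
    simp only [walkGap, backWalk_succ_right, add_sub_cancel_right]
    cases hl : u (i - 1, m) <;> cases hr : u (i, m) <;>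
      simp only [arrivals, walkStep, hl, hr, cond_true, cond_false] <;> push_cast <;>
      simp only [add_zero, ← sub_eq_add_neg, add_sub_cancel_right] <;> omega

lemma walkGap_succ_eq_and_iff (s : ℕ) {z : ℤ} (hz : z ≠ 0) (b c : Bool) :
    (walkGap u n g (s + 1) = z ∧ u (backWalk u n g s - 1, n - (s + 1)) = b ∧
        u (backWalk u n (g + 1) s - 1, n - (s + 1)) = c) ↔
      (walkGap u n g s = z - walkStep c + walkStep b ∧
        u (backWalk u n g s - 1, n - (s + 1)) = b ∧
        u (backWalk u n (g + 1) s - 1, n - (s + 1)) = c) := by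
  rw [walkGap_succ]
  constructor
  · rintro ⟨h, rfl, rfl⟩
    split_ifs at h with h0
    · exact absurd h.symm hz
    · exact ⟨by omega, rfl, rfl⟩
  · rintro ⟨h, rfl, rfl⟩
    refine ⟨?_, rfl, rfl⟩
    split_ifs with h0
    · have hLR : backWalk u n (g + 1) s = backWalk u n g s := by
        unfold walkGap at h0; omega
      rw [hLR] at h
      omega
    · omega

lemma arrivals_le (m : ℕ) (i : ℤ) : arrivals u m i ≤ m + 1 := by
  have h := arrivals_eq_walkGap u m i
  have := backWalk_le u m (i + 1) m
  have := sub_le_backWalk u m i m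
  rw [walkGap] at h
  omega

end Walks

lemma modelB_eq_arrivals_parity (u : ℤ × ℕ → Bool) (y : ℕ → ℤ → Bool)
    (h₀ : y 0 = fun _ => true) (hy : ∀ m, y (m + 1) = modelB (y m) (fun i => u (i, m))) :
    ∀ m i, y m i = decide (arrivals u m i % 2 = 1)
  | 0, i => by simp [h₀, arrivals]
  | m + 1, i => by
    rw [hy, modelB, modelB_eq_arrivals_parity u y h₀ hy m, modelB_eq_arrivals_parity u y h₀ hy m]
    rcases Nat.mod_two_eq_zero_or_one (arrivals u m (i - 1)) with h₁ | h₁ <;>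
      rcases Nat.mod_two_eq_zero_or_one (arrivals u m i) with h₂ | h₂ <;>
      cases hl : u (i - 1, m) <;> cases hr : u (i, m) <;>
      simp [arrivals, Nat.add_mod, h₁, h₂, hl, hr]

lemma modelA_beq_eq_modelB (x u : ℤ → Bool) :
    (fun i => modelA x u (i - 1) == modelA x u i) = modelB (fun i => x (i - 1) == x i) u := by
  funext i
  have h : i - 1 - 1 = i - 2 := by ring
  cases ha : x (i - 2) <;> cases hb : x (i - 1) <;> cases hc : x i <;>
    cases hp : u (i - 1) <;> cases hq : u i <;> simp [modelA, modelB, h, ha, hb, hc, hp, hq]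

lemma modelA_beq_eq_arrivals_parity (u : ℤ × ℕ → Bool) (x : ℕ → ℤ → Bool)
    (h₀ : x 0 = fun _ => true) (hx : ∀ m, x (m + 1) = modelA (x m) (fun i => u (i, m)))
    (m : ℕ) (i : ℤ) : (x m (i - 1) == x m i) = decide (arrivals u m i % 2 = 1) :=
  modelB_eq_arrivals_parity u (fun m i => x m (i - 1) == x m i) (by simp [h₀])
    (fun m => by simp only [hx, modelA_beq_eq_modelB]) m i

section Coins

variable {Ω ι : Type*} [MeasurableSpace Ω] {P : Measure Ω} [IsProbabilityMeasure P]
  {X : ι → Ω → Bool}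

lemma measure_eq_sum_inter_fiber {α β : Type*} [MeasurableSpace α] {μ : Measure α} {f : α → β}
    (s : Finset β) (hf : ∀ b ∈ s, MeasurableSet (f ⁻¹' {b})) {E : Set α} (hE : E ⊆ f ⁻¹' s) :
    μ E = ∑ b ∈ s, μ (E ∩ f ⁻¹' {b}) := by
  calc μ E = μ.restrict E (f ⁻¹' s) := (Measure.restrict_apply_superset hE).symm
    _ = ∑ b ∈ s, μ.restrict E (f ⁻¹' {b}) := (sum_measure_preimage_singleton s hf).symm
    _ = ∑ b ∈ s, μ (E ∩ f ⁻¹' {b}) := Finset.sum_congr rfl fun b hb => by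
      rw [Measure.restrict_apply (hf b hb), Set.inter_comm]

lemma measure_coin_eq (hmeas : ∀ i, Measurable (X i))
    (hunif : ∀ i, P {ω | X i ω = true} = 1 / 2) (i : ι) (b : Bool) :
    P {ω | X i ω = b} = 2⁻¹ := by
  cases b
  · have hm : MeasurableSet {ω | X i ω = true} := hmeas i (measurableSet_singleton true)
    rw [show {ω | X i ω = false} = {ω | X i ω = true}ᶜ by ext; simp, measure_compl hm
      (measure_ne_top _ _), hunif, measure_univ, one_div, ENNReal.one_sub_inv_two]
  · rw [hunif, one_div]

lemma measure_inter_coins_eq (hmeas : ∀ i, Measurable (X i)) (hindep : iIndepFun X P)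
    (hunif : ∀ i, P {ω | X i ω = true} = 1 / 2) {F : (ι → Bool) → Prop} {S : Finset ι}
    (hF : ∀ v w, (∀ i ∈ S, v i = w i) → (F v ↔ F w)) {i j : ι} (hij : i ≠ j) (hi : i ∉ S)
    (hj : j ∉ S) (b c : Bool) :
    P ({ω | F (X · ω)} ∩ {ω | X i ω = b ∧ X j ω = c}) = P {ω | F (X · ω)} / 4 := by
  classical
  have hE : {ω | F (X · ω)} = (fun ω (k : S) => X k ω) ⁻¹'
      {w | F fun k => if h : k ∈ S then w ⟨k, h⟩ else false} := by
    ext ω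
    exact hF _ _ fun k hk => by simp [hk]
  have hC : {ω | X i ω = b ∧ X j ω = c} = (fun ω (k : ({i, j} : Finset ι)) => X k ω) ⁻¹'
      {w | w ⟨i, by simp⟩ = b ∧ w ⟨j, by simp⟩ = c} := rfl
  have hpair : P {ω | X i ω = b ∧ X j ω = c} = 4⁻¹ := by
    have := (hindep.indepFun hij).measure_inter_preimage_eq_mul {b} {c}
      (measurableSet_singleton b) (measurableSet_singleton c)
    rw [show X i ⁻¹' {b} ∩ X j ⁻¹' {c} = {ω | X i ω = b ∧ X j ω = c} from rfl] at this
    simp only [this, Set.preimage, Set.mem_singleton_iff, measure_coin_eq hmeas hunif]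
    rw [← ENNReal.mul_inv (by norm_num) (by norm_num)]
    norm_num
  have hdisj : Disjoint S {i, j} := by simp [hi, hj]
  rw [hE, hC, (hindep.indepFun_finset S {i, j} hdisj hmeas).measure_inter_preimage_eq_mul _ _
    (Set.to_countable _).measurableSet (Set.to_countable _).measurableSet, ← hC, hpair,
    div_eq_mul_inv]

lemma measurable_apply_index [Countable ι] [MeasurableSpace ι]
    [MeasurableSingletonClass ι] (hmeas : ∀ i, Measurable (X i)) {K : Ω → ι} (hK : Measurable K) :
    Measurable fun ω => X (K ω) ω :=
  (measurable_from_prod_countable_left (f := fun p : Ω × ι => X p.2 p.1) hmeas).comp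
    (measurable_id.prodMk hK)

end Coins

lemma Nat.choose_two_mul_succ_add_two (s k : ℕ) :
    (2 * (s + 1)).choose (k + 2) =
      (2 * s).choose k + 2 * (2 * s).choose (k + 1) + (2 * s).choose (k + 2) := by
  rw [show 2 * (s + 1) = 2 * s + 1 + 1 by ring, Nat.choose_succ_succ', Nat.choose_succ_succ',
    Nat.choose_succ_succ']
  ring

lemma Nat.choose_two_mul_succ_succ (s : ℕ) :
    (2 * (s + 1)).choose (s + 1) = 2 * (2 * s + 1).choose s := by
  rw [show 2 * (s + 1) = 2 * s + 1 + 1 by ring, Nat.choose_succ_succ', Nat.choose_symm_half]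
  ring

/-- Reflection principle for the lazy walk absorbed at `0` (steps `-1, 0, 0, +1`): `Q y` stands
for `4 ^ s` times the probability of being at `y + 1` after `s` steps from `1`. -/
lemma add_choose_eq_choose_of_lazyWalk {s : ℕ} {Q Q' : ℕ → ENNReal}
    (hQ : ∀ y, Q y + (2 * s).choose (s + y + 2) = (2 * s).choose (s + y))
    (h₀ : Q' 0 = 2 * Q 0 + Q 1) (h : ∀ y, Q' (y + 1) = 2 * Q (y + 1) + Q (y + 2) + Q y) :
    ∀ y, Q' y + (2 * (s + 1)).choose (s + 1 + y + 2) = (2 * (s + 1)).choose (s + 1 + y)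
  | 0 => by
    have e₀ : Q 0 + (2 * s).choose (s + 2) = (2 * s).choose s := hQ 0
    have e₁ : Q 1 + (2 * s).choose (s + 3) = (2 * s).choose (s + 1) := hQ 1
    rw [h₀, Nat.choose_two_mul_succ_add_two, Nat.choose_two_mul_succ_succ,
      ← Nat.choose_symm_half, Nat.choose_succ_succ']
    push_cast
    calc 2 * Q 0 + Q 1 + ((2 * s).choose (s + 1) + 2 * (2 * s).choose (s + 2) +
          (2 * s).choose (s + 3) : ENNReal)
        = 2 * (Q 0 + (2 * s).choose (s + 2)) + (Q 1 + (2 * s).choose (s + 3)) +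
          (2 * s).choose (s + 1) := by ring
      _ = 2 * ((2 * s).choose s + (2 * s).choose (s + 1)) := by rw [e₀, e₁]; ring
  | y + 1 => by
    have e₀ : Q y + (2 * s).choose (s + y + 2) = (2 * s).choose (s + y) := hQ y
    have e₁ : Q (y + 1) + (2 * s).choose (s + y + 3) = (2 * s).choose (s + y + 1) := hQ (y + 1)
    have e₂ : Q (y + 2) + (2 * s).choose (s + y + 4) = (2 * s).choose (s + y + 2) := hQ (y + 2)
    rw [h, show s + 1 + (y + 1) + 2 = s + y + 2 + 2 by ring,
      show s + 1 + (y + 1) = s + y + 2 by ring, Nat.choose_two_mul_succ_add_two,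
      Nat.choose_two_mul_succ_add_two]
    push_cast
    calc 2 * Q (y + 1) + Q (y + 2) + Q y + ((2 * s).choose (s + y + 2) +
          2 * (2 * s).choose (s + y + 2 + 1) + (2 * s).choose (s + y + 2 + 2) : ENNReal)
        = 2 * (Q (y + 1) + (2 * s).choose (s + y + 3)) +
          (Q (y + 2) + (2 * s).choose (s + y + 4)) +
          (Q y + (2 * s).choose (s + y + 2)) := by ring
      _ = (2 * s).choose (s + y) + 2 * (2 * s).choose (s + y + 1) +
          (2 * s).choose (s + y + 2) := by rw [e₀, e₁, e₂]; ring

section GapLaw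

variable {Ω : Type*} [MeasurableSpace Ω] {P : Measure Ω} [IsProbabilityMeasure P]
  {X : ℤ × ℕ → Ω → Bool}

lemma measurable_backWalk (hmeas : ∀ p, Measurable (X p)) (n : ℕ) (g : ℤ) :
    ∀ s, Measurable fun ω => backWalk (X · ω) n g s
  | 0 => measurable_const
  | s + 1 => by
    have hW := measurable_backWalk hmeas n g s
    exact hW.add ((measurable_of_countable walkStep).comp (measurable_apply_index hmeas
      ((measurable_of_countable fun k : ℤ => (k - 1, n - (s + 1))).comp hW)))

lemma measurable_walkGap (hmeas : ∀ p, Measurable (X p)) (n : ℕ) (g : ℤ) (s : ℕ) :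
    Measurable fun ω => walkGap (X · ω) n g s :=
  (measurable_backWalk hmeas n (g + 1) s).sub (measurable_backWalk hmeas n g s)

/-- The coins read at step `s + 1` lie in a row not read before, at distinct sites as long as the
walks have not met. -/
lemma measure_walkGap_and_coins (hmeas : ∀ p, Measurable (X p)) (hindep : iIndepFun X P)
    (hunif : ∀ p, P {ω | X p ω = true} = 1 / 2) {n s : ℕ} (hs : s + 1 ≤ n) (g : ℤ)
    {x : ℤ} (hx : x ≠ 0) (b c : Bool) :
    P {ω | walkGap (X · ω) n g s = x ∧ X (backWalk (X · ω) n g s - 1, n - (s + 1)) ω = b ∧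
        X (backWalk (X · ω) n (g + 1) s - 1, n - (s + 1)) ω = c} =
      P {ω | walkGap (X · ω) n g s = x} / 4 := by
  set box := Finset.Icc (g - s) g ×ˢ Finset.Ico (n - s) n
  have hsum : ∀ E : Set Ω, P E = ∑ a ∈ Finset.Icc (g - s) g,
      P (E ∩ (fun ω => backWalk (X · ω) n g s) ⁻¹' {a}) := fun E =>
    measure_eq_sum_inter_fiber _ (fun a _ => measurable_backWalk hmeas n g s
      (measurableSet_singleton a)) fun ω _ => by
        simp only [Finset.coe_Icc, Set.mem_preimage, Set.mem_Icc]
        exact ⟨sub_le_backWalk _ n g s, backWalk_le _ n g s⟩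
  rw [hsum, hsum {ω | walkGap (X · ω) n g s = x}, div_eq_mul_inv, Finset.sum_mul]
  refine Finset.sum_congr rfl fun a _ => ?_
  rw [← div_eq_mul_inv]
  have hF : ∀ v w : ℤ × ℕ → Bool, (∀ p ∈ box, v p = w p) →
      ((backWalk v n g s = a ∧ walkGap v n g s = x) ↔
        (backWalk w n g s = a ∧ walkGap w n g s = x)) := fun v w h => by
    have hL : backWalk v n g s = backWalk w n g s :=
      backWalk_congr s (by omega) fun i ℓ _ _ _ _ => h _ (by simp [box]; omega)
    have hR : backWalk v n (g + 1) s = backWalk w n (g + 1) s :=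
      backWalk_congr s (by omega) fun i ℓ _ _ _ _ => h _ (by simp [box]; omega)
    rw [walkGap, walkGap, hL, hR]
  have hfresh : ∀ i, (i, n - (s + 1)) ∉ box := fun i => by simp [box]; omega
  have hne : (a - 1, n - (s + 1)) ≠ (a + x - 1, n - (s + 1)) := by simp; omega
  convert measure_inter_coins_eq hmeas hindep hunif hF hne (hfresh _) (hfresh _) b c using 2
  · ext ω
    simp only [walkGap, Set.mem_inter_iff, Set.mem_ofPred_eq, Set.mem_preimage,
      Set.mem_singleton_iff]
    constructor
    · rintro ⟨⟨hx, hb, hc⟩, rfl⟩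
      exact ⟨⟨rfl, hx⟩, hb, by rwa [← hx, add_sub_cancel]⟩
    · rintro ⟨⟨rfl, hx⟩, hb, hc⟩
      exact ⟨⟨hx, hb, by rwa [← hx, add_sub_cancel] at hc⟩, rfl⟩
  · congr 1
    ext ω
    simp [and_comm]

lemma measure_walkGap_succ_and_coins (hmeas : ∀ p, Measurable (X p)) (hindep : iIndepFun X P)
    (hunif : ∀ p, P {ω | X p ω = true} = 1 / 2) {n s : ℕ} (hs : s + 1 ≤ n) (g : ℤ)
    {z : ℤ} (hz : z ≠ 0) (b c : Bool) :
    P {ω | walkGap (X · ω) n g (s + 1) = z ∧ X (backWalk (X · ω) n g s - 1, n - (s + 1)) ω = b ∧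
        X (backWalk (X · ω) n (g + 1) s - 1, n - (s + 1)) ω = c} =
      if z - walkStep c + walkStep b = 0 then 0
      else P {ω | walkGap (X · ω) n g s = z - walkStep c + walkStep b} / 4 := by
  simp only [walkGap_succ_eq_and_iff _ n g s hz b c]
  split_ifs with hx
  · convert measure_empty (μ := P)
    refine Set.eq_empty_of_forall_notMem fun ω ⟨h0, hb, hc⟩ => ?_
    have hLR : backWalk (X · ω) n (g + 1) s = backWalk (X · ω) n g s := by
      unfold walkGap at h0; omega
    rw [hLR, hb] at hc
    subst hc
    omega
  · exact measure_walkGap_and_coins hmeas hindep hunif hs g hx b c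

lemma measure_walkGap_succ (hmeas : ∀ p, Measurable (X p)) (hindep : iIndepFun X P)
    (hunif : ∀ p, P {ω | X p ω = true} = 1 / 2) {n s : ℕ} (hs : s + 1 ≤ n) (g : ℤ)
    {z : ℤ} (hz : 1 ≤ z) :
    P {ω | walkGap (X · ω) n g (s + 1) = z} * 4 =
      2 * P {ω | walkGap (X · ω) n g s = z} + P {ω | walkGap (X · ω) n g s = z + 1} +
        if z = 1 then 0 else P {ω | walkGap (X · ω) n g s = z - 1} := by
  let coins : Ω → Bool × Bool := fun ω => (X (backWalk (X · ω) n g s - 1, n - (s + 1)) ω,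
    X (backWalk (X · ω) n (g + 1) s - 1, n - (s + 1)) ω)
  have hcoins : Measurable coins := by
    refine (measurable_apply_index hmeas ?_).prodMk (measurable_apply_index hmeas ?_) <;>
      exact (measurable_of_countable fun k : ℤ => (k - 1, n - (s + 1))).comp
        (measurable_backWalk hmeas n _ s)
  have hterm : ∀ b c, P ({ω | walkGap (X · ω) n g (s + 1) = z} ∩ coins ⁻¹' {(b, c)}) =
      if z - walkStep c + walkStep b = 0 then 0
      else P {ω | walkGap (X · ω) n g s = z - walkStep c + walkStep b} / 4 := fun b c => by
    rw [← measure_walkGap_succ_and_coins hmeas hindep hunif hs g (by omega) b c]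
    congr 1
    ext ω
    simp [coins]
  rw [measure_eq_sum_inter_fiber Finset.univ (fun e _ => hcoins (measurableSet_singleton e))
      fun ω _ => by simp,
    Fintype.sum_prod_type, Fintype.sum_bool, Fintype.sum_bool, Fintype.sum_bool]
  simp only [hterm, walkStep, cond_true, cond_false, sub_zero, add_zero, sub_neg_eq_add,
    ← sub_eq_add_neg, add_sub_cancel_right]
  rw [if_neg (by omega), if_neg (by omega)]
  have h4 (a : ENNReal) : a / 4 * 4 = a := ENNReal.div_mul_cancel (by norm_num) (by norm_num)
  split_ifs <;> first | omega | (simp only [zero_add, add_zero, add_mul, h4]; ring)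

lemma measure_walkGap_mul_four_pow (hmeas : ∀ p, Measurable (X p)) (hindep : iIndepFun X P)
    (hunif : ∀ p, P {ω | X p ω = true} = 1 / 2) {n : ℕ}
    (g : ℤ) :
    ∀ s ≤ n, ∀ y : ℕ, P {ω | walkGap (X · ω) n g s = y + 1} * 4 ^ s +
      (2 * s).choose (s + y + 2) = (2 * s).choose (s + y)
  | 0, _, y => by
    rcases y with _ | y
    · simp [walkGap, backWalk]
    · have hempty : {ω | walkGap (X · ω) n g 0 = ((y + 1 : ℕ) : ℤ) + 1} = ∅ :=
        Set.eq_empty_of_forall_notMem fun ω h => by simp [walkGap, backWalk] at h; omega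
      rw [hempty, measure_empty, Nat.choose_eq_zero_of_lt (by omega),
        Nat.choose_eq_zero_of_lt (by omega)]
      simp
  | s + 1, hs, y => by
    refine add_choose_eq_choose_of_lazyWalk
      (Q' := fun y => P {ω | walkGap (X · ω) n g (s + 1) = y + 1} * 4 ^ (s + 1))
      (measure_walkGap_mul_four_pow hmeas hindep hunif (n := n) g s (by omega)) ?_
      (fun y => ?_) y <;>
      rw [pow_succ', ← mul_assoc, measure_walkGap_succ hmeas hindep hunif hs g (by omega)]
    · rw [if_pos (by simp)]
      push_cast
      ring_nf
    · rw [if_neg (by omega)]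
      push_cast
      ring_nf

lemma measure_arrivals_odd_and_lt_mul_four_pow (hmeas : ∀ p, Measurable (X p))
    (hindep : iIndepFun X P) (hunif : ∀ p, P {ω | X p ω = true} = 1 / 2) (n : ℕ) (i : ℤ)
    (T : ℕ) :
    P {ω | arrivals (X · ω) n i % 2 = 1 ∧ arrivals (X · ω) n i < 2 * T} * 4 ^ n +
      (2 * n).choose (n + 2 * T) = (2 * n).choose n := by
  induction T with
  | zero => simp
  | succ T ih =>
    have hgap : {ω | arrivals (X · ω) n i = 2 * T + 1} =
        {ω | walkGap (X · ω) n i n = (2 * T : ℕ) + 1} := by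
      ext ω
      have := arrivals_eq_walkGap (X · ω) n i
      simp only [Set.mem_ofPred_eq]
      omega
    have hsplit : {ω | arrivals (X · ω) n i % 2 = 1 ∧ arrivals (X · ω) n i < 2 * (T + 1)} =
        {ω | arrivals (X · ω) n i % 2 = 1 ∧ arrivals (X · ω) n i < 2 * T} ∪
          {ω | arrivals (X · ω) n i = 2 * T + 1} := by
      ext ω
      simp only [Set.mem_union, Set.mem_ofPred_eq]
      omega
    have hdisj : Disjoint {ω | arrivals (X · ω) n i % 2 = 1 ∧ arrivals (X · ω) n i < 2 * T}
        {ω | arrivals (X · ω) n i = 2 * T + 1} :=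
      Set.disjoint_left.mpr fun ω h₁ h₂ => by simp only [Set.mem_ofPred_eq] at h₁ h₂; omega
    have hmeas' : MeasurableSet {ω | arrivals (X · ω) n i = 2 * T + 1} := by
      rw [hgap]
      exact measurable_walkGap hmeas n i n (measurableSet_singleton _)
    rw [hsplit, measure_union hdisj hmeas', add_mul, add_assoc, hgap, ← ih,
      ← measure_walkGap_mul_four_pow hmeas hindep hunif i n le_rfl (2 * T)]
    ring_nf

lemma measure_arrivals_odd (hmeas : ∀ p, Measurable (X p)) (hindep : iIndepFun X P)
    (hunif : ∀ p, P {ω | X p ω = true} = 1 / 2) (n : ℕ) (i : ℤ) :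
    P {ω | arrivals (X · ω) n i % 2 = 1} = (2 * n).choose n / 4 ^ n := by
  have hall : {ω | arrivals (X · ω) n i % 2 = 1} =
      {ω | arrivals (X · ω) n i % 2 = 1 ∧ arrivals (X · ω) n i < 2 * (n + 1)} := by
    ext ω
    have := arrivals_le (X · ω) n i
    simp only [Set.mem_ofPred_eq]
    omega
  have h := measure_arrivals_odd_and_lt_mul_four_pow hmeas hindep hunif n i (n + 1)
  rw [Nat.choose_eq_zero_of_lt (by omega), Nat.cast_zero, add_zero] at h
  rw [hall, ENNReal.eq_div_iff (by positivity) (by simp), mul_comm, h]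

end GapLaw

lemma choose_two_mul_succ_div_four_pow_succ (m : ℕ) :
    ((2 * (m + 1)).choose (m + 1) : ENNReal) / 4 ^ (m + 1) =
      (2 * m + 1).choose m / (2 * 4 ^ m) := by
  rw [Nat.choose_two_mul_succ_succ, pow_succ, show (4 : ENNReal) ^ m * 4 = 2 * (2 * 4 ^ m) by ring,
    Nat.cast_mul, Nat.cast_ofNat, ENNReal.mul_div_mul_left _ _ (by norm_num) (by norm_num)]

theorem modelA_modelB_full_start {Ω : Type*} [MeasurableSpace Ω] (P : Measure Ω)
    [IsProbabilityMeasure P]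
    -- the realization of model A started from 1^ℤ
    (U : ℤ × ℕ → Ω → Bool) (hUmeas : ∀ p, Measurable (U p))
    (hUindep : iIndepFun U P)
    (hUunif : ∀ p, P {ω | U p ω = true} = 1 / 2)
    (A : ℕ → Ω → ℤ → Bool) (hA0 : ∀ ω, A 0 ω = fun _ => true)
    (hA : ∀ n ω, A (n + 1) ω = modelA (A n ω) (fun i => U (i, n) ω))
    -- the realization of model B started from •^ℤ
    (V : ℤ × ℕ → Ω → Bool) (hVmeas : ∀ p, Measurable (V p))
    (hVindep : iIndepFun V P)
    (hVunif : ∀ p, P {ω | V p ω = true} = 1 / 2)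
    (Y : ℕ → Ω → ℤ → Bool) (hY0 : ∀ ω, Y 0 ω = fun _ => true)
    (hY : ∀ n ω, Y (n + 1) ω = modelB (Y n ω) (fun i => V (i, n) ω))
    (n : ℕ) (hn : 1 ≤ n) :
    P {ω | A n ω 0 = A n ω 1} =
      (Nat.choose (2 * (n - 1) + 1) (n - 1) : ENNReal) / (2 * 4 ^ (n - 1)) ∧
    P {ω | Y n ω 0 = true} =
      (Nat.choose (2 * (n - 1) + 1) (n - 1) : ENNReal) / (2 * 4 ^ (n - 1)) := by
  obtain ⟨m, rfl⟩ : ∃ m, n = m + 1 := ⟨n - 1, by omega⟩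
  have hAodd : {ω | A (m + 1) ω 0 = A (m + 1) ω 1} =
      {ω | arrivals (U · ω) (m + 1) 1 % 2 = 1} := by
    ext ω
    simpa [Bool.beq_eq_decide_eq, decide_eq_decide] using
      modelA_beq_eq_arrivals_parity (U · ω) (A · ω) (hA0 ω) (fun k => hA k ω) (m + 1) 1
  have hYodd : {ω | Y (m + 1) ω 0 = true} = {ω | arrivals (V · ω) (m + 1) 0 % 2 = 1} := by
    ext ω
    simp [modelB_eq_arrivals_parity (V · ω) (Y · ω) (hY0 ω) (fun k => hY k ω) (m + 1) 0]
  rw [hAodd, hYodd, measure_arrivals_odd hUmeas hUindep hUunif,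
    measure_arrivals_odd hVmeas hVindep hVunif, Nat.add_sub_cancel,
    choose_two_mul_succ_div_four_pow_succ]
  exact ⟨rfl, rfl⟩
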